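/- Let Y = Gr(2,5) ∩ {p_{12} = p_{03}} ∩ {p_{13} = p_{24}}. A point v = [1:a_1:a_2:a_3:a_4] ∈ P^4 is the vertex of a σ_{3,1}-plane contained in Y if and only if a_2 = a_3 = 0 and a_4 + a_1² = 0. In particular the vertices of σ_{3,1}-planes in Y form a smooth conic C_0 in the plane Π = {x_2 = x_3 = 0}. -/
import Mathlib


/-- The skew form corresponding to `p₁₂ - p₀₃`. -/
def Om (a b : Fin 5 → ℂ) : ℂ :=
  (a 1 * b 2 - a 2 * b 1) - (a 0 * b 3 - a 3 * b 0)

/-- The skew form corresponding to `p₁₃ - p₂₄`. -/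
def Om' (a b : Fin 5 → ℂ) : ℂ :=
  (a 1 * b 3 - a 3 * b 1) - (a 2 * b 4 - a 4 * b 2)

/-- Total isotropy of a subspace. -/
def IsIsotropic (f : (Fin 5 → ℂ) → (Fin 5 → ℂ) → ℂ) (W : Submodule ℂ (Fin 5 → ℂ)) : Prop :=
  ∀ a ∈ W, ∀ b ∈ W, f a b = 0

lemma Om_self (x : Fin 5 → ℂ) : Om x x = 0 := by simp only [Om]; ring

/-- `Om v ·` as a linear map. -/
def OmL (v : Fin 5 → ℂ) : (Fin 5 → ℂ) →ₗ[ℂ] ℂ where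
  toFun b := Om v b
  map_add' x y := by simp only [Om, Pi.add_apply]; ring
  map_smul' c x := by simp only [Om, Pi.smul_apply, smul_eq_mul, RingHom.id_apply]; ring

lemma finrank_ker_OmL (v : Fin 5 → ℂ) (h0 : v 0 = 1) :
    Module.finrank ℂ (LinearMap.ker (OmL v)) = 4 := by
  have hsurj : Function.Surjective (OmL v) := by
    intro c
    refine ⟨(-c) • ![0,0,0,1,0], ?_⟩
    show Om v _ = c
    simp [Om, h0]
  have hr : LinearMap.range (OmL v) = ⊤ := LinearMap.range_eq_top.2 hsurj
  have h := LinearMap.finrank_range_add_finrank_ker (OmL v)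
  rw [hr, finrank_top] at h
  rw [Module.finrank_fin_fun, Module.finrank_self] at h
  omega

lemma finrank_pair {x y : Fin 5 → ℂ} (h : LinearIndependent ℂ ![x, y]) :
    Module.finrank ℂ (Submodule.span ℂ ({x, y} : Set (Fin 5 → ℂ))) = 2 := by
  have h2 := finrank_span_eq_card h
  have hr : Set.range ![x, y] = {x, y} := by
    simp [Matrix.range_cons, Matrix.range_empty, Set.pair_comm]
  rw [hr] at h2
  simpa using h2

/-- For `Y = Gr(2,5) ∩ {p₁₂ = p₀₃} ∩ {p₁₃ = p₂₄}`: a point `v = [1:a₁:a₂:a₃:a₄] ∈ ℙ⁴`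
is the vertex of a `σ_{3,1}`-plane contained in `Y` (i.e. there is a 4-space `V₄ ∋ v`
such that every 2-plane `W` with `v ∈ W ≤ V₄` satisfies both Plücker relations) iff
`a₂ = a₃ = 0` and `a₄ + a₁² = 0`. In particular the vertices form a smooth conic `C₀`
in the plane `Π = {x₂ = x₃ = 0}`. -/
theorem stmt16 (v : Fin 5 → ℂ) (h0 : v 0 = 1) :
    (∃ V₄ : Submodule ℂ (Fin 5 → ℂ), Module.finrank ℂ V₄ = 4 ∧ v ∈ V₄ ∧
        ∀ W : Submodule ℂ (Fin 5 → ℂ), Submodule.span ℂ {v} ≤ W → W ≤ V₄ →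
          Module.finrank ℂ W = 2 → (IsIsotropic Om W ∧ IsIsotropic Om' W))
      ↔ (v 2 = 0 ∧ v 3 = 0 ∧ v 4 + (v 1) ^ 2 = 0) := by
  constructor
  · rintro ⟨V₄, hdim, hv, hW⟩
    -- Step 1: every nonzero w ∈ V₄ with w 0 = 0 is orthogonal to v for both forms.
    have key : ∀ w ∈ V₄, w 0 = 0 → w ≠ 0 → Om v w = 0 ∧ Om' v w = 0 := by
      intro w hwV hw0 hwne
      have hind : LinearIndependent ℂ ![v, w] := by
        rw [LinearIndependent.pair_iff]
        intro s t hst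
        have h00 := congrFun hst 0
        simp only [Pi.add_apply, Pi.smul_apply, smul_eq_mul, h0, hw0, mul_one, mul_zero,
          add_zero, Pi.zero_apply] at h00
        refine ⟨h00, ?_⟩
        rw [h00, zero_smul, zero_add] at hst
        rcases smul_eq_zero.mp hst with h | h
        · exact h
        · exact absurd h hwne
      have hsub : Submodule.span ℂ ({v, w} : Set (Fin 5 → ℂ)) ≤ V₄ := by
        rw [Submodule.span_le]
        rintro x (rfl | rfl)
        · exact hv
        · exact hwV
      have hmono : Submodule.span ℂ ({v} : Set (Fin 5 → ℂ)) ≤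
          Submodule.span ℂ ({v, w} : Set (Fin 5 → ℂ)) :=
        Submodule.span_mono (by simp)
      obtain ⟨hI, hI'⟩ := hW _ hmono hsub (finrank_pair hind)
      have hvm : v ∈ Submodule.span ℂ ({v, w} : Set (Fin 5 → ℂ)) :=
        Submodule.subset_span (by simp)
      have hwm : w ∈ Submodule.span ℂ ({v, w} : Set (Fin 5 → ℂ)) :=
        Submodule.subset_span (by simp)
      exact ⟨hI v hvm w hwm, hI' v hvm w hwm⟩
    -- Step 2: V₄ is contained in the kernel of the functional Om v ·.
    have hle : V₄ ≤ LinearMap.ker (OmL v) := by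
      intro w hwV
      rw [LinearMap.mem_ker]
      show Om v w = 0
      set w' : Fin 5 → ℂ := w - w 0 • v with hw'
      have hw'V : w' ∈ V₄ := Submodule.sub_mem _ hwV (Submodule.smul_mem _ _ hv)
      have hw'0 : w' 0 = 0 := by simp [hw', h0]
      have hOmw' : Om v w' = 0 := by
        by_cases hz : w' = 0
        · rw [hz]; simp [Om]
        · exact (key w' hw'V hw'0 hz).1
      have hexp : Om v w' = Om v w - w 0 * Om v v := by
        simp only [Om, hw', Pi.sub_apply, Pi.smul_apply, smul_eq_mul]; ring
      rw [hexp, Om_self, mul_zero, sub_zero] at hOmw'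
      exact hOmw'
    have heq : V₄ = LinearMap.ker (OmL v) :=
      Submodule.eq_of_le_of_finrank_eq hle (by rw [hdim, finrank_ker_OmL v h0])
    -- Step 3: plug in explicit vectors of the kernel.
    have t1 : v 2 = 0 := by
      have hb : (![0,0,0,0,1] : Fin 5 → ℂ) ∈ V₄ := by
        rw [heq, LinearMap.mem_ker]
        show Om v _ = 0
        simp [Om]
      have h5 := (key _ hb (by simp) (by
        intro h; have := congrFun h 4; simp at this)).2
      simp only [Om'] at h5
      simpa using h5
    have t2 : v 3 = 0 := by
      have hb : (![0,1,0,0,0] : Fin 5 → ℂ) ∈ V₄ := by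
        rw [heq, LinearMap.mem_ker]
        show Om v _ = 0
        simp [Om, t1]
      have h5 := (key _ hb (by simp) (by
        intro h; have := congrFun h 1; simp at this)).2
      simp only [Om'] at h5
      simpa using h5
    have t3 : v 4 + (v 1) ^ 2 = 0 := by
      have hb : (![0,0,1,v 1,0] : Fin 5 → ℂ) ∈ V₄ := by
        rw [heq, LinearMap.mem_ker]
        show Om v _ = 0
        simp only [Om]
        simp [h0]
      have h5 := (key _ hb (by simp) (by
        intro h; have := congrFun h 2; simp at this)).2
      simp only [Om'] at h5
      simp only [t2] at h5
      simp at h5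
      linear_combination h5
    exact ⟨t1, t2, t3⟩
  · rintro ⟨h2, h3, h4⟩
    refine ⟨LinearMap.ker (OmL v), finrank_ker_OmL v h0, ?_, ?_⟩
    · rw [LinearMap.mem_ker]; exact Om_self v
    · intro W hvW hWker hWrank
      have hvWm : v ∈ W := hvW (Submodule.mem_span_singleton_self v)
      -- the two linear forms are proportional on this locus
      have himp : ∀ x : Fin 5 → ℂ, Om v x = 0 → Om' v x = 0 := by
        intro x hx
        simp only [Om, Om'] at hx ⊢
        linear_combination (-(v 1)) * hx + (x 2) * h4 - (v 1 * x 3) * h0 -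
          (x 1 - v 1 * x 0) * h3 - (x 4 + v 1 * x 1) * h2
      have hva : ∀ a ∈ W, Om v a = 0 := by
        intro a ha
        have := hWker ha
        rw [LinearMap.mem_ker] at this
        exact this
      -- any two elements of W are dependent modulo v
      have hdep2 : ∀ a ∈ W, ∀ b ∈ W, ∃ g : Fin 3 → ℂ,
          (∀ i, g 0 * v i + g 1 * a i + g 2 * b i = 0) ∧ (g 1 ≠ 0 ∨ g 2 ≠ 0) := by
        intro a ha b hb
        have hnli : ¬ LinearIndependent ℂ ![v, a, b] := by
          intro hli
          have h3' := finrank_span_eq_card hli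
          have hsub : Submodule.span ℂ (Set.range ![v, a, b]) ≤ W := by
            rw [Submodule.span_le]
            rintro x ⟨i, rfl⟩
            fin_cases i <;> simpa using (by assumption : _ ∈ W)
          have := Submodule.finrank_mono hsub
          rw [h3', hWrank] at this
          simp at this
        rw [Fintype.not_linearIndependent_iff] at hnli
        obtain ⟨g, hsum, i, hgi⟩ := hnli
        refine ⟨g, ?_, ?_⟩
        · intro j
          have := congrFun hsum j
          simpa [Fin.sum_univ_three] using this
        · by_contra hcon
          push_neg at hcon
          obtain ⟨hg1, hg2⟩ := hcon
          have hg0 : g 0 ≠ 0 := by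
            fin_cases i
            · exact hgi
            · exact absurd hg1 hgi
            · exact absurd hg2 hgi
          have := congrFun hsum 0
          simp only [Fin.sum_univ_three, Matrix.cons_val_zero, Matrix.cons_val_one,
            Matrix.head_cons, Pi.add_apply, Pi.smul_apply, smul_eq_mul, Pi.zero_apply,
            Matrix.cons_val_two, Matrix.tail_cons, hg1, hg2, zero_mul, add_zero, h0,
            mul_one] at this
          exact hg0 this
      constructor
      · intro a ha b hb
        obtain ⟨g, key2, hg⟩ := hdep2 a ha b hb
        have hvb0 := hva b hb
        have hva0 := hva a ha
        simp only [Om] at hvb0 hva0 ⊢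
        rcases hg with hg1 | hg2
        · have hmul : g 1 * ((a 1 * b 2 - a 2 * b 1) - (a 0 * b 3 - a 3 * b 0)) = 0 := by
            linear_combination b 2 * key2 1 - b 1 * key2 2 - b 3 * key2 0 + b 0 * key2 3 -
              g 0 * hvb0
          exact (mul_eq_zero.mp hmul).resolve_left hg1
        · have hmul : g 2 * ((a 1 * b 2 - a 2 * b 1) - (a 0 * b 3 - a 3 * b 0)) = 0 := by
            linear_combination a 1 * key2 2 - a 2 * key2 1 - a 0 * key2 3 + a 3 * key2 0 +
              g 0 * hva0
          exact (mul_eq_zero.mp hmul).resolve_left hg2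
      · intro a ha b hb
        obtain ⟨g, key2, hg⟩ := hdep2 a ha b hb
        have hvb0 := himp b (hva b hb)
        have hva0 := himp a (hva a ha)
        simp only [Om'] at hvb0 hva0 ⊢
        rcases hg with hg1 | hg2
        · have hmul : g 1 * ((a 1 * b 3 - a 3 * b 1) - (a 2 * b 4 - a 4 * b 2)) = 0 := by
            linear_combination b 3 * key2 1 - b 1 * key2 3 - b 4 * key2 2 + b 2 * key2 4 -
              g 0 * hvb0
          exact (mul_eq_zero.mp hmul).resolve_left hg1
        · have hmul : g 2 * ((a 1 * b 3 - a 3 * b 1) - (a 2 * b 4 - a 4 * b 2)) = 0 := by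
            linear_combination a 1 * key2 3 - a 3 * key2 1 - a 2 * key2 4 + a 4 * key2 2 +
              g 0 * hva0
          exact (mul_eq_zero.mp hmul).resolve_left hg2
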